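/- arXiv:math/0703309 — 3 statements merged into one kernel-verified Lean document; each statement's English description precedes it below -/
import Mathlib

section
/- For functions f1, f2, g1, g2 : G → ℝ on an abelian group G with finite support, |∑_x (f1*f2)(x)·(g1*g2)(x)| ≤ T_2(f1)^{1/4} T_2(f2)^{1/4} T_2(g1)^{1/4} T_2(g2)^{1/4}, where (f*g)(x) = ∑_s f(s)g(x-s) and T_2(f) = ∑_x (f*f)(x)^2. -/
open Finset

variable {G : Type*} [AddCommGroup G]

/-- Additive convolution `(f * g)(x) = ∑_s f(s) g(x - s)`. -/
noncomputable def conv (f g : G → ℝ) (x : G) : ℝ := ∑ᶠ s, f s * g (x - s)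

/-- `T₂(f) = ∑_x (f * f)(x)^2`. -/
noncomputable def T2F (f : G → ℝ) : ℝ := ∑ᶠ x, (conv f f x) ^ 2

/-
Writing `f̃(a) = f(-a)` and `corr f g t = ∑ₐ f a g(a + t)`, one has `conv f g = corr f̃ g`, and
`∑ₜ corr p q t · corr r s t` counts the quadruples `(a, x, b, y)` with `x - a = y - b`, weighted by
`p a q x r b s y`; this condition is invariant under exchanging `(q, x)` with `(r, b)`, so the
sum equals `∑ᵤ corr p r u · corr q s u`. Hence the left-hand side is
`∑ᵤ corr g₁ f₁ u · corr f₂ g₂ u`, and Cauchy–Schwarz bounds it by the square roots of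
`∑ corr g₁ f₁ ^ 2` and `∑ corr f₂ g₂ ^ 2`.
By the same exchange, `∑ corr f g ^ 2 = ∑ corr f f · corr g g ≤ √T₂(f) √T₂(g)`, since
`T₂(f) = ∑ corr f f ^ 2`.
-/

open Function Pointwise

noncomputable def corr (f g : G → ℝ) (t : G) : ℝ := ∑ᶠ a, f a * g (a + t)

lemma conv_eq_corr (f g : G → ℝ) (x : G) : conv f g x = corr (fun a => f (-a)) g x := by
  rw [corr, ← finsum_comp_equiv (Equiv.neg G)]
  exact finsum_congr fun _ => by simp [neg_add_eq_sub]

lemma corr_comp_neg (f g : G → ℝ) (t : G) :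
    corr (fun a => f (-a)) (fun a => g (-a)) t = corr g f t := by
  rw [corr, ← finsum_comp_equiv ((Equiv.addRight t).trans (Equiv.neg G))]
  exact finsum_congr fun _ => by simp [mul_comm]

section Correlation

variable {f g : G → ℝ}

lemma corr_eq_sum {S : Finset G} (hf : support f ⊆ S) (t : G) :
    corr f g t = ∑ a ∈ S, f a * g (a + t) :=
  finsum_eq_sum_of_support_subset _ fun _ ha => hf (left_ne_zero_of_mul ha)

lemma support_corr_subset : support (corr f g) ⊆ support g - support f := by
  intro t ht
  by_contra hnot
  refine ht (finsum_eq_zero_of_forall_eq_zero fun a => ?_)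
  by_contra hne
  exact hnot ⟨a + t, right_ne_zero_of_mul hne, a, left_ne_zero_of_mul hne, add_sub_cancel_left a t⟩

lemma finite_support_corr (hf : (support f).Finite) (hg : (support g).Finite) :
    (support (corr f g)).Finite :=
  (hg.sub hf).subset support_corr_subset

end Correlation

lemma finsum_corr_mul_eq_sum {p q : G → ℝ} {S : Finset G} (hp : support p ⊆ S)
    (hq : support q ⊆ S) (h : G → ℝ) :
    ∑ᶠ t, corr p q t * h t = ∑ a ∈ S, ∑ x ∈ S, p a * q x * h (x - a) := by
  simp_rw [corr_eq_sum hp, Finset.sum_mul]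
  rw [finsum_sum_comm]
  · refine Finset.sum_congr rfl fun a _ => ?_
    calc ∑ᶠ t, p a * q (a + t) * h t
        = ∑ᶠ t, p a * q (a + t) * h (a + t - a) := by simp only [add_sub_cancel_left]
      _ = ∑ᶠ x, p a * q x * h (x - a) :=
        finsum_comp_equiv (Equiv.addLeft a) (f := fun x => p a * q x * h (x - a))
      _ = ∑ x ∈ S, p a * q x * h (x - a) :=
        finsum_eq_sum_of_support_subset _ fun x hx => hq (right_ne_zero_of_mul
          (left_ne_zero_of_mul hx))
  · intro a _
    exact (S.finite_toSet.preimage (add_right_injective a).injOn).subset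
      fun t ht => hq (right_ne_zero_of_mul (left_ne_zero_of_mul ht))

lemma finsum_corr_mul_corr_comm {p q r : G → ℝ} (s : G → ℝ) (hp : (support p).Finite)
    (hq : (support q).Finite) (hr : (support r).Finite) :
    ∑ᶠ t, corr p q t * corr r s t = ∑ᶠ u, corr p r u * corr q s u := by
  classical
  set S := hp.toFinset ∪ hq.toFinset ∪ hr.toFinset
  have hpS : support p ⊆ S := by intro x hx; simp [S, hx]
  have hqS : support q ⊆ S := by intro x hx; simp [S, hx]
  have hrS : support r ⊆ S := by intro x hx; simp [S, hx]
  simp_rw [finsum_corr_mul_eq_sum hpS hqS, finsum_corr_mul_eq_sum hpS hrS, corr_eq_sum hrS,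
    corr_eq_sum hqS, Finset.mul_sum]
  refine Finset.sum_congr rfl fun a _ => Finset.sum_comm.trans ?_
  refine Finset.sum_congr rfl fun b _ => Finset.sum_congr rfl fun x _ => ?_
  rw [show b + (x - a) = x + (b - a) by abel]
  ring

lemma abs_finsum_mul_le_sqrt_mul_sqrt {ι : Type*} {u v : ι → ℝ} (hu : (support u).Finite)
    (hv : (support v).Finite) :
    |∑ᶠ i, u i * v i| ≤ √(∑ᶠ i, u i ^ 2) * √(∑ᶠ i, v i ^ 2) := by
  classical
  set S := hu.toFinset ∪ hv.toFinset
  have huS : support u ⊆ S := by intro x hx; simp [S, hx]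
  have hvS : support v ⊆ S := by intro x hx; simp [S, hx]
  rw [finsum_eq_sum_of_support_subset _ fun i hi => huS (left_ne_zero_of_mul hi),
    finsum_eq_sum_of_support_subset (fun i => u i ^ 2) (by simpa using huS),
    finsum_eq_sum_of_support_subset (fun i => v i ^ 2) (by simpa using hvS),
    ← Real.sqrt_mul (S.sum_nonneg fun i _ => sq_nonneg (u i))]
  exact Real.abs_le_sqrt (S.sum_mul_sq_le_sq_mul_sq u v)

lemma T2F_eq_finsum_corr_sq {f : G → ℝ} (hf : (support f).Finite) :
    T2F f = ∑ᶠ t, corr f f t ^ 2 := by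
  have hf' : (support fun a => f (-a)).Finite := hf.preimage neg_injective.injOn
  simp_rw [T2F, conv_eq_corr, sq, finsum_corr_mul_corr_comm _ hf' hf hf', corr_comp_neg]

lemma finsum_corr_sq_le_sqrt_mul_sqrt {f g : G → ℝ} (hf : (support f).Finite)
    (hg : (support g).Finite) :
    ∑ᶠ t, corr f g t ^ 2 ≤ √(T2F f) * √(T2F g) := by
  rw [T2F_eq_finsum_corr_sq hf, T2F_eq_finsum_corr_sq hg]
  simp_rw [sq, finsum_corr_mul_corr_comm _ hf hg hf, ← sq]
  exact (le_abs_self _).trans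
    (abs_finsum_mul_le_sqrt_mul_sqrt (finite_support_corr hf hf) (finite_support_corr hg hg))

lemma sqrt_sqrt_eq_rpow {x : ℝ} (hx : 0 ≤ x) : √(√x) = x ^ ((1 : ℝ) / 4) := by
  rw [Real.sqrt_eq_rpow, Real.sqrt_eq_rpow, ← Real.rpow_mul hx]
  norm_num

theorem stmt1 (f1 f2 g1 g2 : G → ℝ)
    (hf1 : (Function.support f1).Finite) (hf2 : (Function.support f2).Finite)
    (hg1 : (Function.support g1).Finite) (hg2 : (Function.support g2).Finite) :
    |∑ᶠ x, conv f1 f2 x * conv g1 g2 x| ≤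
      (T2F f1) ^ ((1 : ℝ)/4) * (T2F f2) ^ ((1 : ℝ)/4) *
        (T2F g1) ^ ((1 : ℝ)/4) * (T2F g2) ^ ((1 : ℝ)/4) := by
  simp_rw [conv_eq_corr]
  rw [finsum_corr_mul_corr_comm _ (hf1.preimage neg_injective.injOn) hf2
    (hg1.preimage neg_injective.injOn)]
  simp_rw [corr_comp_neg]
  have hT2F_nonneg (f : G → ℝ) : 0 ≤ T2F f := finsum_nonneg fun x => sq_nonneg _
  calc |∑ᶠ t, corr g1 f1 t * corr f2 g2 t|
      ≤ √(∑ᶠ t, corr g1 f1 t ^ 2) * √(∑ᶠ t, corr f2 g2 t ^ 2) :=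
        abs_finsum_mul_le_sqrt_mul_sqrt (finite_support_corr hg1 hf1) (finite_support_corr hf2 hg2)
    _ ≤ √(√(T2F g1) * √(T2F f1)) * √(√(T2F f2) * √(T2F g2)) := by
        gcongr
        exacts [finsum_corr_sq_le_sqrt_mul_sqrt hg1 hf1,
          finsum_corr_sq_le_sqrt_mul_sqrt hf2 hg2]
    _ = _ := by
        simp only [Real.sqrt_mul (Real.sqrt_nonneg _), sqrt_sqrt_eq_rpow (hT2F_nonneg _)]
        ring
end

section
/- Let k1 = 2^{p1} and k2 = 2^{p2} be powers of two with p1, p2 ≥ 1, and let f_1,…,f_{k1}, g_1,…,g_{k2} : G → ℝ be finitely supported functions on an abelian group G. Then |∑_x (f_1 * ⋯ * f_{k1})(x) · (g_1 * ⋯ * g_{k2})(x)| ≤ ∏_{i=1}^{k1} T_{k1}(f_i)^{1/(2k1)} · ∏_{j=1}^{k2} T_{k2}(g_j)^{1/(2k2)}, where T_k(f) = ∑_x (f *_{k-1} f)^2(x) denotes the sum of squares of the k-fold convolution of f with itself. -/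
open Finset
open scoped Classical

variable {G : Type*} [AddCommGroup G]

/-- `n`-fold convolution `(f₁ * ⋯ * fₙ)(x) = ∑_{t₁ + ⋯ + tₙ = x} ∏ᵢ fᵢ(tᵢ)`. -/
noncomputable def multiConv (n : ℕ) (f : Fin n → G → ℝ) (x : G) : ℝ :=
  ∑ᶠ t : Fin n → G, if (∑ i, t i) = x then ∏ i, f i (t i) else 0

/-- `T_k(f) = ∑_x (f *_{k-1} f)(x)^2`. -/
noncomputable def TkF (k : ℕ) (f : G → ℝ) : ℝ :=
  ∑ᶠ x, (multiConv k (fun _ => f) x) ^ 2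

/-!
Identify finitely supported functions with the group algebra `ℝ[G]`, where convolution is the
product. Since `G` is abelian, the reflection `ã(x) = a(-x)` is a ring endomorphism and
`⟨a, b⟩ = (a * b̃)(0)`. Hence `‖uv‖² = ⟨u ũ, v ṽ⟩ ≤ ‖u ũ‖ ‖v ṽ‖ = ‖u²‖ ‖v²‖` by Cauchy–Schwarz, and
splitting a product of `k = 2^p` factors into halves repeatedly gives
`‖a₁ ⋯ aₖ‖^(2k) ≤ ∏ ‖aᵢ^k‖²`, where `‖aᵢ^k‖² = T_k(aᵢ)`. One more Cauchy–Schwarz on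
`∑ₓ (f₁ * ⋯ * f_{k₁})(x) (g₁ * ⋯ * g_{k₂})(x)` concludes.
-/

namespace AddMonoidAlgebra

section Reflect

variable {k : Type*} [CommSemiring k]

noncomputable def reflect : AddMonoidAlgebra k G →+* AddMonoidAlgebra k G :=
  mapDomainRingHom k (negAddMonoidHom : G →+ G)

lemma coeff_reflect (a : AddMonoidAlgebra k G) (x : G) : (reflect a).coeff x = a.coeff (-x) := by
  conv_lhs => rw [← neg_neg x]
  exact Finsupp.mapDomain_apply neg_injective a.coeff (-x)

@[simp]
lemma reflect_reflect (a : AddMonoidAlgebra k G) : reflect (reflect a) = a := by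
  ext x; rw [coeff_reflect, coeff_reflect, neg_neg]

lemma coeff_prod {ι : Type*} [Fintype ι] (a : ι → AddMonoidAlgebra k G) (x : G) :
    (∏ i, a i).coeff x = ∑ t ∈ Fintype.piFinset fun i => (a i).coeff.support,
      if ∑ i, t i = x then ∏ i, (a i).coeff (t i) else 0 := by
  conv_lhs => rw [← Finset.prod_congr rfl fun i _ => sum_coeff_single (a i)]
  simp only [Finsupp.sum, Finset.prod_univ_sum, prod_single, coeff_sum, Finsupp.finsetSum_apply,
    coeff_single, Finsupp.single_apply]

noncomputable def dot {M : Type*} (a b : AddMonoidAlgebra k M) : k := ∑ᶠ x, a.coeff x * b.coeff x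

lemma dot_eq_sum {M : Type*} {a : AddMonoidAlgebra k M} (b : AddMonoidAlgebra k M) {s : Finset M}
    (hs : a.coeff.support ⊆ s) : dot a b = ∑ x ∈ s, a.coeff x * b.coeff x :=
  finsum_eq_sum_of_support_subset _ fun _ hx =>
    hs (Finsupp.mem_support_iff.2 (left_ne_zero_of_mul hx))

lemma coeff_mul_reflect_zero (a b : AddMonoidAlgebra k G) : (a * reflect b).coeff 0 = dot a b := by
  rw [coeff_mul_apply_left, dot_eq_sum b subset_rfl, Finsupp.sum]
  simp only [add_zero, coeff_reflect, neg_neg]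

lemma dot_mul_mul (a b c d : AddMonoidAlgebra k G) :
    dot (a * b) (c * d) = dot (a * reflect c) (reflect b * d) := by
  simp only [← coeff_mul_reflect_zero, map_mul, reflect_reflect, mul_mul_mul_comm]

end Reflect

section Real

lemma dot_self_nonneg {M : Type*} (a : AddMonoidAlgebra ℝ M) : 0 ≤ dot a a :=
  finsum_nonneg fun _ => mul_self_nonneg _

lemma dot_sq_le_dot_self_mul_dot_self {M : Type*} (a b : AddMonoidAlgebra ℝ M) :
    dot a b ^ 2 ≤ dot a a * dot b b := by
  let s := a.coeff.support ∪ b.coeff.support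
  have ha : a.coeff.support ⊆ s := subset_union_left
  have hb : b.coeff.support ⊆ s := subset_union_right
  simpa only [dot_eq_sum _ ha, dot_eq_sum _ hb, sq] using sum_mul_sq_le_sq_mul_sq s a.coeff b.coeff

lemma abs_dot_le {M : Type*} (a b : AddMonoidAlgebra ℝ M) :
    |dot a b| ≤ √(dot a a) * √(dot b b) := by
  rw [← Real.sqrt_mul (dot_self_nonneg a)]
  exact Real.abs_le_sqrt (dot_sq_le_dot_self_mul_dot_self a b)

lemma dot_self_mul_sq_le (u v : AddMonoidAlgebra ℝ G) :
    dot (u * v) (u * v) ^ 2 ≤ dot (u ^ 2) (u ^ 2) * dot (v ^ 2) (v ^ 2) := by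
  have hu : dot (u ^ 2) (u ^ 2) = dot (u * reflect u) (u * reflect u) := by
    rw [sq, dot_mul_mul, mul_comm (reflect u)]
  have hv : dot (v ^ 2) (v ^ 2) = dot (v * reflect v) (v * reflect v) := by
    rw [sq, dot_mul_mul, mul_comm (reflect v)]
  rw [dot_mul_mul, hu, hv, mul_comm (reflect v)]
  exact dot_sq_le_dot_self_mul_dot_self _ _

lemma dot_self_prod_pow_le_of_double {n : ℕ}
    (h : ∀ b : Fin n → AddMonoidAlgebra ℝ G,
      dot (∏ i, b i) (∏ i, b i) ^ n ≤ ∏ i, dot (b i ^ n) (b i ^ n))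
    (a : Fin (n + n) → AddMonoidAlgebra ℝ G) :
    dot (∏ i, a i) (∏ i, a i) ^ (n + n) ≤ ∏ i, dot (a i ^ (n + n)) (a i ^ (n + n)) := by
  have hsq : ∀ b : Fin n → AddMonoidAlgebra ℝ G,
      dot ((∏ i, b i) ^ 2) ((∏ i, b i) ^ 2) ^ n ≤ ∏ i, dot (b i ^ (n + n)) (b i ^ (n + n)) := by
    intro b
    have := h fun i => b i ^ 2
    rw [Finset.prod_pow] at this
    simpa only [← pow_mul, two_mul] using this
  rw [Fin.prod_univ_add, Fin.prod_univ_add, show ∀ x : ℝ, x ^ (n + n) = (x ^ 2) ^ n from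
    fun x => by ring]
  set u := ∏ i : Fin n, a (Fin.castAdd n i)
  set v := ∏ i : Fin n, a (Fin.natAdd n i)
  calc (dot (u * v) (u * v) ^ 2) ^ n
      ≤ (dot (u ^ 2) (u ^ 2) * dot (v ^ 2) (v ^ 2)) ^ n :=
        pow_le_pow_left₀ (sq_nonneg _) (dot_self_mul_sq_le u v) n
    _ = dot (u ^ 2) (u ^ 2) ^ n * dot (v ^ 2) (v ^ 2) ^ n := mul_pow _ _ n
    _ ≤ _ := mul_le_mul (hsq _) (hsq _) (pow_nonneg (dot_self_nonneg _) n)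
        (prod_nonneg fun i _ => dot_self_nonneg _)

lemma dot_self_prod_pow_le (p : ℕ) (a : Fin (2 ^ p) → AddMonoidAlgebra ℝ G) :
    dot (∏ i, a i) (∏ i, a i) ^ 2 ^ p ≤ ∏ i, dot (a i ^ 2 ^ p) (a i ^ 2 ^ p) := by
  induction p with
  | zero => simp
  | succ p ih =>
    revert a
    rw [pow_succ, mul_two]
    exact dot_self_prod_pow_le_of_double ih

end Real

noncomputable def ofSupportFinite {k M : Type*} [Semiring k] (f : M → k)
    (hf : f.support.Finite) : AddMonoidAlgebra k M :=
  ofCoeff (Finsupp.ofSupportFinite f hf)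

@[simp]
lemma coeff_ofSupportFinite {k M : Type*} [Semiring k] (f : M → k) (hf : f.support.Finite) :
    ⇑(ofSupportFinite f hf).coeff = f :=
  Finsupp.ofSupportFinite_coe

end AddMonoidAlgebra

open AddMonoidAlgebra

lemma multiConv_eq_coeff_prod (n : ℕ) (f : Fin n → G → ℝ) (hf : ∀ i, (f i).support.Finite) :
    multiConv n f = ⇑(∏ i, ofSupportFinite (f i) (hf i)).coeff := by
  ext x
  rw [multiConv, coeff_prod]
  simp only [coeff_ofSupportFinite]
  refine finsum_eq_sum_of_support_subset _ fun t ht => ?_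
  have hprod : ∏ i, f i (t i) ≠ 0 := fun h0 => ht (by simp [h0])
  simpa [prod_ne_zero_iff] using hprod

lemma TkF_eq_dot (k : ℕ) (f : G → ℝ) (hf : f.support.Finite) :
    TkF k f = dot (ofSupportFinite f hf ^ k) (ofSupportFinite f hf ^ k) := by
  rw [TkF, multiConv_eq_coeff_prod k _ fun _ => hf, prod_const, card_univ, Fintype.card_fin]
  simp only [dot, sq]

lemma TkF_nonneg (k : ℕ) (f : G → ℝ) (hf : f.support.Finite) : 0 ≤ TkF k f :=
  TkF_eq_dot k f hf ▸ dot_self_nonneg _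

lemma Real.sqrt_le_prod_rpow_of_pow_le {ι : Type*} (s : Finset ι) {x : ℝ} {T : ι → ℝ} {n : ℕ}
    (hn : n ≠ 0) (hx : 0 ≤ x) (hT : ∀ i ∈ s, 0 ≤ T i) (h : x ^ n ≤ ∏ i ∈ s, T i) :
    √x ≤ ∏ i ∈ s, T i ^ (1 / (2 * (n : ℝ))) := by
  rw [Real.finsetProd_rpow s T hT, Real.sqrt_eq_rpow]
  calc x ^ (1 / 2 : ℝ) = (x ^ n) ^ (1 / (2 * (n : ℝ))) := by
        rw [← Real.rpow_natCast, ← Real.rpow_mul hx]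
        congr 1
        field_simp
    _ ≤ _ := Real.rpow_le_rpow (pow_nonneg hx n) h (by positivity)

lemma sqrt_dot_self_prod_le (p : ℕ) (f : Fin (2 ^ p) → G → ℝ) (hf : ∀ i, (f i).support.Finite) :
    √(dot (∏ i, ofSupportFinite (f i) (hf i)) (∏ i, ofSupportFinite (f i) (hf i))) ≤
      ∏ i, TkF (2 ^ p) (f i) ^ (1 / (2 * (2 ^ p : ℝ))) := by
  have h := dot_self_prod_pow_le p fun i => ofSupportFinite (f i) (hf i)
  simp only [← TkF_eq_dot] at h
  exact_mod_cast Real.sqrt_le_prod_rpow_of_pow_le univ (pow_ne_zero p two_ne_zero)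
    (dot_self_nonneg _) (fun i _ => TkF_nonneg _ _ (hf i)) h

theorem stmt2_general (p1 p2 : ℕ)
    (f : Fin (2 ^ p1) → G → ℝ) (g : Fin (2 ^ p2) → G → ℝ)
    (hf : ∀ i, (Function.support (f i)).Finite)
    (hg : ∀ j, (Function.support (g j)).Finite) :
    |∑ᶠ x, multiConv (2 ^ p1) f x * multiConv (2 ^ p2) g x| ≤
      (∏ i, (TkF (2 ^ p1) (f i)) ^ (1 / (2 * (2 ^ p1 : ℝ)))) *
        ∏ j, (TkF (2 ^ p2) (g j)) ^ (1 / (2 * (2 ^ p2 : ℝ))) := by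
  rw [multiConv_eq_coeff_prod _ f hf, multiConv_eq_coeff_prod _ g hg]
  exact (abs_dot_le _ _).trans <| mul_le_mul (sqrt_dot_self_prod_le p1 f hf)
    (sqrt_dot_self_prod_le p2 g hg) (Real.sqrt_nonneg _)
    (prod_nonneg fun i _ => Real.rpow_nonneg (TkF_nonneg _ _ (hf i)) _)

theorem stmt2 (p1 p2 : ℕ) (hp1 : 1 ≤ p1) (hp2 : 1 ≤ p2)
    (f : Fin (2 ^ p1) → G → ℝ) (g : Fin (2 ^ p2) → G → ℝ)
    (hf : ∀ i, (Function.support (f i)).Finite)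
    (hg : ∀ j, (Function.support (g j)).Finite) :
    |∑ᶠ x, multiConv (2 ^ p1) f x * multiConv (2 ^ p2) g x| ≤
      (∏ i, (TkF (2 ^ p1) (f i)) ^ (1 / (2 * (2 ^ p1 : ℝ)))) *
        ∏ j, (TkF (2 ^ p2) (g j)) ^ (1 / (2 * (2 ^ p2 : ℝ))) :=
  stmt2_general p1 p2 f g hf hg
end

section
/- Let q be prime, n ≥ 1, G = (ℤ/qℤ)^n, P a subspace of G, and k = 2^p a power of two with p ≥ 1. Then for every subset B ⊆ P, T_k(B) ≥ (|B|/|P|)^{2k} · T_k(P), where T_k(X) counts 2k-tuples from X summing equally in two groups of k. -/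
/-!
Write `r(s)` for the number of `k`-tuples from `A` summing to `s`, so that `T_k(A) = ∑ₛ r(s)²`
and `∑ₛ r(s) = |A|ᵏ`. Since the last entry of a tuple is fixed by the others and the sum,
`r(s) ≤ |A|ᵏ⁻¹`, whence `T_k(P) ≤ |P|²ᵏ⁻¹`. On the other hand every `k`-fold sum from `B ⊆ P`
lies in `P`, so Cauchy–Schwarz over `P` gives `|B|²ᵏ ≤ |P| · T_k(B)`. Combining the two bounds
gives the claim, for any `k ≥ 1`.
-/

open Finset
open scoped Classical

/-- `Tk k A` : number of `2k`-tuples from `A` with equal `k`-fold sums. -/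
noncomputable def Tk {G : Type*} [AddCommGroup G] (k : ℕ) (A : Finset G) : ℕ :=
  (((Fintype.piFinset fun _ : Fin k => A) ×ˢ (Fintype.piFinset fun _ : Fin k => A)).filter
    fun t => ∑ i, t.1 i = ∑ i, t.2 i).card

noncomputable def sumCount {G : Type*} [AddCommGroup G] (k : ℕ) (A : Finset G) (s : G) : ℕ :=
  ((Fintype.piFinset fun _ : Fin k => A).filter fun x => ∑ i, x i = s).card

section SumCount

variable {G : Type*} [AddCommGroup G] (k : ℕ) (A S : Finset G)

theorem sum_sumCount
    (hS : ∀ x ∈ Fintype.piFinset fun _ : Fin k => A, ∑ i, x i ∈ S) :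
    ∑ s ∈ S, sumCount k A s = A.card ^ k := by
  simp only [sumCount]
  rw [← card_eq_sum_card_fiberwise fun x hx => hS x hx, Fintype.card_piFinset_const]

theorem Tk_eq_sum_sq_sumCount
    (hS : ∀ x ∈ Fintype.piFinset fun _ : Fin k => A, ∑ i, x i ∈ S) :
    Tk k A = ∑ s ∈ S, sumCount k A s ^ 2 := by
  rw [Tk, card_eq_sum_card_fiberwise (f := fun t : (Fin k → G) × (Fin k → G) => ∑ i, t.1 i)
    fun t ht => hS _ (mem_product.mp (mem_filter.mp ht).1).1]
  refine sum_congr rfl fun s _ => ?_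
  rw [sumCount, sq, ← card_product]
  congr 1
  ext ⟨x, y⟩
  simp only [mem_filter, mem_product]
  constructor
  · rintro ⟨⟨⟨hx, hy⟩, hxy⟩, rfl⟩
    exact ⟨⟨hx, rfl⟩, hy, hxy.symm⟩
  · rintro ⟨⟨hx, rfl⟩, hy, hys⟩
    exact ⟨⟨⟨hx, hy⟩, hys.symm⟩, rfl⟩

variable {A} in
theorem sumCount_succ_le (s : G) : sumCount (k + 1) A s ≤ A.card ^ k := by
  rw [sumCount, ← Fintype.card_piFinset_const]
  refine card_le_card_of_injOn Fin.init (fun x hx => ?_) fun x hx y hy hxy => ?_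
  · simp only [coe_filter, Fintype.mem_piFinset, Set.mem_ofPred_eq, mem_coe] at hx ⊢
    exact fun i => hx.1 _
  · simp only [coe_filter, Set.mem_ofPred_eq] at hx hy
    have hsum := hx.2.trans hy.2.symm
    rw [Fin.sum_univ_castSucc, Fin.sum_univ_castSucc] at hsum
    have hinit : ∀ i : Fin k, x i.castSucc = y i.castSucc := fun i => congrFun hxy i
    rw [sum_congr rfl fun i _ => hinit i] at hsum
    funext j
    exact Fin.lastCases (add_left_cancel hsum) (fun i => hinit i) j

theorem Tk_le_card_pow (hk : k ≠ 0) : Tk k A ≤ A.card ^ (2 * k - 1) := by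
  obtain ⟨k, rfl⟩ := Nat.exists_eq_succ_of_ne_zero hk
  have hS : ∀ x ∈ Fintype.piFinset fun _ : Fin (k + 1) => A,
      ∑ i, x i ∈ (Fintype.piFinset fun _ : Fin (k + 1) => A).image fun x => ∑ i, x i :=
    fun x hx => mem_image_of_mem _ hx
  rw [Tk_eq_sum_sq_sumCount _ _ _ hS]
  calc ∑ s ∈ _, sumCount (k + 1) A s ^ 2
      ≤ ∑ s ∈ _, A.card ^ k * sumCount (k + 1) A s :=
        sum_le_sum fun s _ => by rw [sq]; exact Nat.mul_le_mul_right _ (sumCount_succ_le k s)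
    _ = A.card ^ (2 * (k + 1) - 1) := by
        rw [← mul_sum, sum_sumCount _ _ _ hS, ← pow_add]
        congr 1
        omega

theorem card_pow_le_card_mul_Tk (hS : ∀ x ∈ Fintype.piFinset fun _ : Fin k => A, ∑ i, x i ∈ S) :
    A.card ^ (2 * k) ≤ S.card * Tk k A :=
  calc A.card ^ (2 * k) = (∑ s ∈ S, sumCount k A s) ^ 2 := by
        rw [sum_sumCount _ _ _ hS, ← pow_mul, mul_comm]
    _ ≤ S.card * ∑ s ∈ S, sumCount k A s ^ 2 := sq_sum_le_card_mul_sum_sq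
    _ = S.card * Tk k A := by rw [Tk_eq_sum_sq_sumCount _ _ _ hS]

end SumCount

theorem stmt4_general (q n : ℕ) [Fact q.Prime] (p : ℕ)
    (P : Submodule (ZMod q) (Fin n → ZMod q))
    (B : Finset (Fin n → ZMod q)) (hB : ∀ x ∈ B, x ∈ P) :
    ((B.card : ℝ) / (P : Set (Fin n → ZMod q)).toFinset.card) ^ (2 * 2 ^ p) *
        (Tk (2 ^ p) (P : Set (Fin n → ZMod q)).toFinset : ℝ) ≤
      (Tk (2 ^ p) B : ℝ) := by
  set P' := (P : Set (Fin n → ZMod q)).toFinset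
  set k := 2 ^ p
  set m := P'.card
  have hm : (0 : ℝ) < m := by
    exact_mod_cast card_pos.mpr ⟨0, by simp [P']⟩
  have hsums : ∀ x ∈ Fintype.piFinset fun _ : Fin k => B, ∑ i, x i ∈ P' := by
    intro x hx
    rw [Fintype.mem_piFinset] at hx
    simpa [P'] using P.sum_mem fun i _ => hB _ (hx i)
  have hlower : (B.card : ℝ) ^ (2 * k) ≤ m * Tk k B := by
    exact_mod_cast card_pow_le_card_mul_Tk k B P' hsums
  have hupper : (Tk k P' : ℝ) ≤ (m : ℝ) ^ (2 * k - 1) := by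
    exact_mod_cast Tk_le_card_pow k P' (by positivity)
  have hpow : (m : ℝ) ^ (2 * k) = m ^ (2 * k - 1) * m := by
    rw [← pow_succ]
    congr 1
    have : k ≠ 0 := by positivity
    omega
  calc ((B.card : ℝ) / m) ^ (2 * k) * Tk k P'
      ≤ ((B.card : ℝ) / m) ^ (2 * k) * m ^ (2 * k - 1) := by gcongr
    _ = (B.card : ℝ) ^ (2 * k) / m := by
        rw [div_pow, hpow]
        field_simp
    _ ≤ Tk k B := by
        rw [div_le_iff₀ hm]
        linarith

theorem stmt4 (q n : ℕ) [Fact q.Prime] (hn : 1 ≤ n) (p : ℕ) (hp : 1 ≤ p)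
    (P : Submodule (ZMod q) (Fin n → ZMod q))
    (B : Finset (Fin n → ZMod q)) (hB : ∀ x ∈ B, x ∈ P) :
    ((B.card : ℝ) / (P : Set (Fin n → ZMod q)).toFinset.card) ^ (2 * 2 ^ p) *
        (Tk (2 ^ p) (P : Set (Fin n → ZMod q)).toFinset : ℝ) ≤
      (Tk (2 ^ p) B : ℝ) :=
  stmt4_general q n p P B hB
end
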